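/- arXiv:1411.2495 — 2 statements merged into one kernel-verified Lean document; each statement's English description precedes it below -/
import Mathlib

section
/- For every integer n ≥ 0, the coefficient identity ((2)_n)^2 ((5/2)_n)^2 / (n! ((3)_n)^3) + (32/9) · ((1)_{n+1})^2 ((3/2)_{n+1})^2 / ((n+1)! ((2)_{n+1})^3) = (128/(9π)) · (Γ(5/2+n)/Γ(3+n))^2 holds. -/
open Real

/-- Rising factorial (Pochhammer symbol) `(a)_n` on the reals. -/
noncomputable def poch (a : ℝ) (n : ℕ) : ℝ := (ascPochhammer ℝ n).eval a

/-- Generalized hypergeometric series ₄F₃. -/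
noncomputable def F43 (a1 a2 a3 a4 b1 b2 b3 x : ℝ) : ℝ :=
  ∑' n : ℕ, (poch a1 n * poch a2 n * poch a3 n * poch a4 n) /
    (poch b1 n * poch b2 n * poch b3 n * (n.factorial : ℝ)) * x ^ n

/-- Generalized hypergeometric series ₃F₂. -/
noncomputable def F32 (a1 a2 a3 b1 b2 x : ℝ) : ℝ :=
  ∑' n : ℕ, (poch a1 n * poch a2 n * poch a3 n) /
    (poch b1 n * poch b2 n * (n.factorial : ℝ)) * x ^ n

/-- Gaussian hypergeometric series ₂F₁. -/
noncomputable def F21 (a1 a2 b1 x : ℝ) : ℝ :=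
  ∑' n : ℕ, (poch a1 n * poch a2 n) /
    (poch b1 n * (n.factorial : ℝ)) * x ^ n

/-- Complete elliptic integral of the first kind. -/
noncomputable def ellipticK (k : ℝ) : ℝ :=
  ∫ θ in (0:ℝ)..(π/2), 1 / Real.sqrt (1 - (k * Real.sin θ) ^ 2)

/-- Complete elliptic integral of the second kind. -/
noncomputable def ellipticE (k : ℝ) : ℝ :=
  ∫ θ in (0:ℝ)..(π/2), Real.sqrt (1 - (k * Real.sin θ) ^ 2)


lemma gamma_poch (a : ℝ) (ha : 0 < a) : ∀ n : ℕ, Real.Gamma (a + n) = poch a n * Real.Gamma a := by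
  intro n
  induction n with
  | zero => simp [poch]
  | succ k ih =>
      have h1 : a + (k + 1 : ℕ) = (a + k) + 1 := by push_cast; ring
      have h2 : a + (k : ℝ) ≠ 0 := by positivity
      rw [h1, Real.Gamma_add_one h2, ih]
      simp only [poch, ascPochhammer_succ_eval]
      ring

lemma poch_one (m : ℕ) : poch 1 m = m.factorial := by
  have := gamma_poch 1 one_pos m
  rw [Real.Gamma_one, mul_one] at this
  rw [← this]
  rw [show (1 : ℝ) + m = (m : ℝ) + 1 by ring, Real.Gamma_nat_eq_factorial]

lemma poch_two (m : ℕ) : poch 2 m = (m + 1).factorial := by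
  have := gamma_poch 2 two_pos m
  have h2 : Real.Gamma 2 = 1 := by
    rw [show (2:ℝ) = 1 + 1 by norm_num, Real.Gamma_add_one one_ne_zero, Real.Gamma_one]; norm_num
  rw [h2, mul_one] at this
  rw [← this, show (2 : ℝ) + m = ((m + 1 : ℕ) : ℝ) + 1 by push_cast; ring, Real.Gamma_nat_eq_factorial]

lemma poch_three (m : ℕ) : poch 3 m = (m + 2).factorial / 2 := by
  have := gamma_poch 3 three_pos m
  have h2 : Real.Gamma 2 = 1 := by
    rw [show (2:ℝ) = 1 + 1 by norm_num, Real.Gamma_add_one one_ne_zero, Real.Gamma_one]; norm_num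
  have h3 : Real.Gamma 3 = 2 := by
    rw [show (3:ℝ) = 2 + 1 by norm_num, Real.Gamma_add_one two_ne_zero, h2]; norm_num
  rw [h3] at this
  have hG : Real.Gamma (3 + m) = ((m + 2).factorial : ℝ) := by
    rw [show (3 : ℝ) + m = ((m + 2 : ℕ) : ℝ) + 1 by push_cast; ring, Real.Gamma_nat_eq_factorial]
  rw [hG] at this
  linarith

lemma gamma_52 : Real.Gamma (5/2) = 3 / 4 * Real.sqrt π := by
  have h12 : Real.Gamma (1/2) = Real.sqrt π := Real.Gamma_one_half_eq
  have h32 : Real.Gamma (3/2) = 1/2 * Real.sqrt π := by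
    rw [show (3:ℝ)/2 = 1/2 + 1 by norm_num, Real.Gamma_add_one (by norm_num), h12]
    try ring
  rw [show (5:ℝ)/2 = 3/2 + 1 by norm_num, Real.Gamma_add_one (by norm_num), h32]
  ring

theorem stmt_1 (n : ℕ) :
    (poch 2 n) ^ 2 * (poch (5/2) n) ^ 2 / ((n.factorial : ℝ) * (poch 3 n) ^ 3) +
      (32 / 9) * (poch 1 (n + 1)) ^ 2 * (poch (3/2) (n + 1)) ^ 2 /
        (((n + 1).factorial : ℝ) * (poch 2 (n + 1)) ^ 3) =
    (128 / (9 * π)) * (Real.Gamma (5/2 + n) / Real.Gamma (3 + n)) ^ 2 := by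
  have hs : Real.sqrt π > 0 := Real.sqrt_pos.mpr Real.pi_pos
  have hs2 : Real.sqrt π ^ 2 = π := Real.sq_sqrt Real.pi_pos.le
  set s := Real.sqrt π with hsdef
  set G := Real.Gamma (5/2 + n) with hG
  have h52 : poch (5/2) n = G * (4 / (3 * s)) := by
    have := gamma_poch (5/2) (by norm_num) n
    rw [gamma_52] at this
    rw [← hG] at this
    field_simp at this ⊢
    try linarith [this]
  have h32 : poch (3/2) (n + 1) = G * (2 / s) := by
    have := gamma_poch (3/2) (by norm_num) (n + 1)
    have hgg : Real.Gamma (3/2) = 1/2 * s := by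
      rw [show (3:ℝ)/2 = 1/2 + 1 by norm_num, Real.Gamma_add_one (by norm_num), Real.Gamma_one_half_eq]
      try ring
    rw [hgg] at this
    have harg : (3:ℝ)/2 + (n + 1 : ℕ) = 5/2 + n := by push_cast; ring
    rw [harg, ← hG] at this
    field_simp at this ⊢
    try linarith [this]
  have hG3 : Real.Gamma (3 + n) = ((n + 2).factorial : ℝ) := by
    rw [show (3 : ℝ) + n = ((n + 2 : ℕ) : ℝ) + 1 by push_cast; ring, Real.Gamma_nat_eq_factorial]
  rw [h52, h32, hG3, poch_two, poch_two, poch_one, poch_three]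
  have hf1 : ((n+1).factorial : ℝ) = (n + 1) * n.factorial := by
    rw [Nat.factorial_succ]; push_cast; ring
  have hf2 : ((n+2).factorial : ℝ) = (n + 2) * (n + 1) * n.factorial := by
    rw [show n + 2 = (n + 1) + 1 from rfl, Nat.factorial_succ]
    push_cast [Nat.factorial_succ]
    ring
  rw [hf2, hf1]
  have hn0 : (n.factorial : ℝ) ≠ 0 := Nat.cast_ne_zero.mpr n.factorial_ne_zero
  have hn1 : (n : ℝ) + 1 ≠ 0 := by positivity
  have hn2 : (n : ℝ) + 2 ≠ 0 := by positivity
  have hsne : s ≠ 0 := ne_of_gt hs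
  have hpi : π ≠ 0 := Real.pi_ne_zero
  field_simp
  rw [← hs2]
  ring
end

section
/- For all real κ with 16κ² < 1, κ² ₄F₃[1,1,3/2,3/2; 2,2,2; 16κ²] = 1/2 - (1/π) E(4κ) - κ² ₄F₃[1/2,1,1,3/2; 2,2,2; 16κ²], where E(k) = ∫₀^{π/2} √(1-k²sin²θ) dθ is the complete elliptic integral of the second kind. -/
/-! Expanding `√(1 - k² sin² θ)` as a binomial series and integrating term by term with Wallis'
formula gives `E(k) = (π/2) ₂F₁[1/2, -1/2; 1; k²]`. Since `(3/2)ₙ + (1/2)ₙ = 2(n+1)(1/2)ₙ`, the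
`n`-th terms of the two `₄F₃` series add up to a multiple of the `(n+1)`-st term of this `₂F₁`
series, so `x (₄F₃[1,1,3/2,3/2] + ₄F₃[1/2,1,1,3/2]) = 8 (1 - ₂F₁)` for `|x| < 1`. -/

open Real

open scoped Nat

lemma poch_succ_right (a : ℝ) (n : ℕ) : poch a (n + 1) = poch a n * (a + n) :=
  ascPochhammer_succ_eval n a

lemma poch_succ_left (a : ℝ) (n : ℕ) : poch a (n + 1) = a * poch (a + 1) n := by
  simp [poch, ascPochhammer_succ_left, Polynomial.eval_comp]

lemma poch_one_s9 (n : ℕ) : poch 1 n = n ! := ascPochhammer_eval_one ℝ n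

lemma poch_two_s9 (n : ℕ) : poch 2 n = (n + 1)! := by
  have h := poch_succ_left 1 n
  norm_num [poch_one_s9] at h
  exact h.symm

lemma poch_three_halves (n : ℕ) : poch (3/2) n = (2 * n + 1) * poch (1/2) n := by
  have h := (poch_succ_right (1/2) n).symm.trans (poch_succ_left (1/2) n)
  norm_num at h
  linarith

lemma abs_poch_le_poch {a b : ℝ} (hab : |a| ≤ b) (n : ℕ) : |poch a n| ≤ poch b n := by
  induction n with
  | zero => simp [poch]
  | succ n ih =>
    rw [poch_succ_right, poch_succ_right, abs_mul]
    have hn : |a + n| ≤ b + n := (abs_add_le _ _).trans (by simpa using hab)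
    exact mul_le_mul ih hn (abs_nonneg _) ((abs_nonneg _).trans ih)

lemma poch_nonneg_of_abs_le {a b : ℝ} (hab : |a| ≤ b) (n : ℕ) : 0 ≤ poch b n :=
  (abs_nonneg _).trans (abs_poch_le_poch hab n)

lemma summable_div_mul_pow {p q : ℕ → ℝ} {x : ℝ} (hpq : ∀ n, |p n| ≤ q n) (hx : |x| < 1) :
    Summable fun n => p n / q n * x ^ n := by
  refine Summable.of_norm_bounded (summable_geometric_of_lt_one (abs_nonneg x) hx) fun n => ?_
  rw [Real.norm_eq_abs, abs_mul, abs_div, abs_pow, abs_of_nonneg ((abs_nonneg _).trans (hpq n))]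
  exact mul_le_of_le_one_left (by positivity)
    (div_le_one_of_le₀ (hpq n) ((abs_nonneg _).trans (hpq n)))

lemma summable_F43_terms {a1 a2 a3 a4 b1 b2 b3 x : ℝ} (h1 : |a1| ≤ 1) (h2 : |a2| ≤ b1)
    (h3 : |a3| ≤ b2) (h4 : |a4| ≤ b3) (hx : |x| < 1) :
    Summable fun n : ℕ => (poch a1 n * poch a2 n * poch a3 n * poch a4 n) /
      (poch b1 n * poch b2 n * poch b3 n * (n ! : ℝ)) * x ^ n := by
  refine summable_div_mul_pow (fun n => ?_) hx
  calc _ ≤ poch 1 n * poch b1 n * poch b2 n * poch b3 n := by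
        simp only [abs_mul]
        gcongr <;>
          first | exact abs_poch_le_poch ‹_› n | apply_rules [mul_nonneg, poch_nonneg_of_abs_le]
    _ = _ := by rw [poch_one_s9]; ring

lemma summable_F21_terms {a1 a2 b1 x : ℝ} (h1 : |a1| ≤ 1) (h2 : |a2| ≤ b1) (hx : |x| < 1) :
    Summable fun n : ℕ => (poch a1 n * poch a2 n) / (poch b1 n * (n ! : ℝ)) * x ^ n := by
  refine summable_div_mul_pow (fun n => ?_) hx
  calc _ ≤ poch 1 n * poch b1 n := by
        rw [abs_mul]
        gcongr <;> first | exact abs_poch_le_poch ‹_› n | exact poch_nonneg_of_abs_le ‹_› n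
    _ = _ := by rw [poch_one_s9, mul_comm]

lemma integral_sin_pow_even_half (n : ℕ) :
    ∫ θ in (0:ℝ)..(π/2), sin θ ^ (2 * n) = π / 2 * (poch (1/2) n / n !) := by
  induction n with
  | zero => simp [poch]
  | succ n ih =>
    rw [mul_add_one, integral_sin_pow, ih, poch_succ_right, Nat.factorial_succ, sin_zero,
      cos_pi_div_two, zero_pow (by omega), zero_mul, mul_zero, sub_zero, zero_div, zero_add]
    push_cast
    field_simp
    ring

lemma poch_neg_div_factorial (a : ℝ) (n : ℕ) : poch (-a) n / n ! = (-1) ^ n * Ring.choose a n := by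
  rw [poch, ← Polynomial.ascPochhammer_smeval_eq_eval,
    Polynomial.ascPochhammer_smeval_neg_eq_descPochhammer,
    Ring.descPochhammer_eq_factorial_smul_choose, nsmul_eq_mul, Units.smul_def,
    Int.coe_negOnePow_natCast, zsmul_eq_mul]
  push_cast
  field_simp

lemma hasSum_sqrt_one_sub {u : ℝ} (hu : |u| < 1) :
    HasSum (fun n : ℕ => poch (-(1/2)) n / n ! * u ^ n) (√(1 - u)) := by
  have h := Real.one_add_rpow_hasFPowerSeriesOnBall_zero (a := 1/2).hasSum (y := -u)
    (by simpa [← ofReal_norm, ENNReal.ofReal_lt_one] using hu)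
  simp only [FormalMultilinearSeries.ofScalars_apply_eq, binomialSeries, zero_add, smul_eq_mul] at h
  rw [← sub_eq_add_neg, ← Real.sqrt_eq_rpow] at h
  refine h.congr_fun fun n => ?_
  rw [poch_neg_div_factorial, neg_pow]
  ring

lemma hasSum_ellipticE {k : ℝ} (hk : k ^ 2 < 1) :
    HasSum (fun n : ℕ =>
      π / 2 * ((poch (1/2) n * poch (-(1/2)) n) / (poch 1 n * n !) * (k ^ 2) ^ n)) (ellipticE k) := by
  have hsin (θ : ℝ) : (k * sin θ) ^ 2 ≤ k ^ 2 := by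
    rw [mul_pow]
    exact mul_le_of_le_one_right (sq_nonneg k) (sin_sq_le_one θ)
  have hcoeff (n : ℕ) : |poch (-(1/2)) n / n !| ≤ 1 := by
    rw [abs_div, Nat.abs_cast, ← poch_one_s9]
    exact div_le_one_of_le₀ (abs_poch_le_poch (by norm_num) n) (by rw [poch_one_s9]; positivity)
  have hint := intervalIntegral.hasSum_integral_of_dominated_convergence
    (F := fun n θ => poch (-(1/2)) n / n ! * ((k * sin θ) ^ 2) ^ n) (μ := MeasureTheory.volume)
    (a := 0) (b := π / 2) (fun n _ => (k ^ 2) ^ n)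
    (fun n => (by fun_prop : Continuous _).aestronglyMeasurable)
    (fun n => Filter.Eventually.of_forall fun θ _ => by
      rw [Real.norm_eq_abs, abs_mul, abs_pow, abs_of_nonneg (sq_nonneg (k * sin θ))]
      exact (mul_le_mul (hcoeff n) (pow_le_pow_left₀ (sq_nonneg _) (hsin θ) n) (by positivity)
        zero_le_one).trans_eq (one_mul _))
    (Filter.Eventually.of_forall fun θ _ => summable_geometric_of_lt_one (sq_nonneg k) hk)
    intervalIntegrable_const
    (Filter.Eventually.of_forall fun θ _ => hasSum_sqrt_one_sub <| by
      rw [abs_of_nonneg (sq_nonneg _)]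
      exact (hsin θ).trans_lt hk)
  refine hint.congr_fun fun n => ?_
  simp only [mul_pow, ← pow_mul, intervalIntegral.integral_const_mul, integral_sin_pow_even_half,
    poch_one_s9]
  ring

lemma ellipticE_eq_F21 {k : ℝ} (hk : k ^ 2 < 1) :
    ellipticE k = π / 2 * F21 (1/2) (-(1/2)) 1 (k ^ 2) := by
  rw [F21, ← tsum_mul_left]
  exact (hasSum_ellipticE hk).tsum_eq.symm

lemma mul_add_F43_terms_eq_F21_term_succ (x : ℝ) (n : ℕ) :
    x * ((poch 1 n * poch 1 n * poch (3/2) n * poch (3/2) n) /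
          (poch 2 n * poch 2 n * poch 2 n * (n ! : ℝ)) * x ^ n +
        (poch (1/2) n * poch 1 n * poch 1 n * poch (3/2) n) /
          (poch 2 n * poch 2 n * poch 2 n * (n ! : ℝ)) * x ^ n) =
      -8 * ((poch (1/2) (n + 1) * poch (-(1/2)) (n + 1)) / (poch 1 (n + 1) * ((n + 1)! : ℝ)) *
        x ^ (n + 1)) := by
  have hneg : poch (-(1/2)) (n + 1) = -(1/2) * poch (1/2) n := by
    rw [poch_succ_left]; norm_num
  rw [hneg, poch_succ_right, poch_one_s9, poch_one_s9, poch_two_s9, poch_three_halves, Nat.factorial_succ]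
  push_cast
  field_simp
  ring

lemma mul_F43_add_F43 {x : ℝ} (hx : |x| < 1) :
    x * (F43 1 1 (3/2) (3/2) 2 2 2 x + F43 (1/2) 1 1 (3/2) 2 2 2 x) =
      8 * (1 - F21 (1/2) (-(1/2)) 1 x) := by
  have hA := summable_F43_terms (a1 := 1) (a2 := 1) (a3 := 3/2) (a4 := 3/2) (b1 := 2) (b2 := 2)
    (b3 := 2) (by norm_num) (by norm_num) (by norm_num) (by norm_num) hx
  have hB := summable_F43_terms (a1 := 1/2) (a2 := 1) (a3 := 1) (a4 := 3/2) (b1 := 2) (b2 := 2)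
    (b3 := 2) (by norm_num) (by norm_num) (by norm_num) (by norm_num) hx
  have hc := summable_F21_terms (a1 := 1/2) (a2 := -(1/2)) (b1 := 1) (by norm_num) (by norm_num) hx
  rw [F43, F43, F21, ← hA.tsum_add hB, ← tsum_mul_left, hc.tsum_eq_zero_add]
  simp only [mul_add_F43_terms_eq_F21_term_succ, tsum_mul_left]
  simp [poch]

theorem stmt_9 (κ : ℝ) (h : 16 * κ ^ 2 < 1) :
    κ ^ 2 * F43 1 1 (3/2) (3/2) 2 2 2 (16 * κ ^ 2) =
      1/2 - (1/π) * ellipticE (4 * κ)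
        - κ ^ 2 * F43 (1/2) 1 1 (3/2) 2 2 2 (16 * κ ^ 2) := by
  have hx : |16 * κ ^ 2| < 1 := by rwa [abs_of_nonneg (by positivity)]
  have hE := ellipticE_eq_F21 (k := 4 * κ) (by linarith)
  rw [show (4 * κ) ^ 2 = 16 * κ ^ 2 by ring] at hE
  have hS := mul_F43_add_F43 hx
  have hπ : 1 / π * (π / 2 * F21 (1/2) (-(1/2)) 1 (16 * κ ^ 2)) =
      F21 (1/2) (-(1/2)) 1 (16 * κ ^ 2) / 2 := by
    field_simp
  rw [hE, hπ]
  linear_combination hS / 16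
end
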